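/- arXiv:2305.16073 — 2 statements merged into one kernel-verified Lean document; each statement's English description precedes it below -/
import Mathlib

section
/- Capture-avoiding substitution distributes over sequential composition: for SLC terms N, P, M and a value-substitution of N for x, {N/x}(P;M) = ({N/x}P);({N/x}M). -/
/-- Terms of the Sequential λ-calculus:  `M ::= * | x.M | [N].M | <x>.M`. -/
inductive SLC : Type where
  | skip : SLC                  -- `*`
  | var : String → SLC → SLC    -- `x.M`
  | app : SLC → SLC → SLC       -- `[N].M`
  | abs : String → SLC → SLC    -- `<x>.M`

/-- Sequential composition `N ; M`, defined by recursion on the first term: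
`*;M = M`, `(x.N);M = x.(N;M)`, `([P].N);M = [P].(N;M)`, `(<x>.N);M = <x>.(N;M)`
(in the abstraction case the bound variable is chosen not free in `M`). -/
def seq : SLC → SLC → SLC
  | .skip, M => M
  | .var x N, M => .var x (seq N M)
  | .app P N, M => .app P (seq N M)
  | .abs x N, M => .abs x (seq N M)

/-- Capture-avoiding substitution `{N/x}M`: `{N/x}* = *`, `{N/x}(x.M) = N;{N/x}M`,
`{N/x}(y.M) = y.{N/x}M` for `y ≠ x`, `{N/x}([P].M) = [{N/x}P].{N/x}M`,
`{N/x}(<y>.M) = <y>.{N/x}M` (bound variables chosen with `y ∉ fv N ∪ {x}`). -/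
def subst (N : SLC) (x : String) : SLC → SLC
  | .skip => .skip
  | .var y M => if y = x then seq N (subst N x M) else .var y (subst N x M)
  | .app P M => .app (subst N x P) (subst N x M)
  | .abs y M => .abs y (subst N x M)

theorem seq_assoc (A B C : SLC) : seq (seq A B) C = seq A (seq B C) := by
  induction A <;> simp [seq, *]

/-- Substitution distributes over sequential composition:
`{N/x}(P;M) = ({N/x}P);({N/x}M)`. -/
theorem subst_seq (N : SLC) (x : String) (P M : SLC) :
    subst N x (seq P M) = seq (subst N x P) (subst N x M) := by
  induction P with
  | skip => rfl
  | var y Q ih =>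
    by_cases h : y = x <;> simp [seq, subst, h, ih, seq_assoc]
  | app Q R ihQ ihR => simp [seq, subst, ihR]
  | abs y Q ih => simp [seq, subst, ih]
end

section
/- Permutation reduction alone is strongly normalising on FMC terms: the rewrite [N]a.b<x>.M → b<x>.[N]a.M (a ≠ b, x ∉ fv(N)), closed under all contexts, admits no infinite reduction sequences. A decreasing measure is given by the multiset, over all application subterms [N]a.M occurring in the term, of the number of abstractions in M whose location differs from a. -/
/-- Raw terms of the FMC: `* | x.M | [N]a.M | a<x>.M`, locations drawn from ℕ. -/
inductive Tm : Type where
  | skip : Tm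
  | var : String → Tm → Tm
  | app : Tm → ℕ → Tm → Tm      -- `[N]a.M`
  | abs : ℕ → String → Tm → Tm  -- `a<x>.M`

/-- Free variables. -/
def fv : Tm → Finset String
  | .skip => ∅
  | .var x M => fv M ∪ {x}
  | .app N _ M => fv N ∪ fv M
  | .abs _ x M => fv M \ {x}

/-- One-step permutation reduction `[N]a.b<x>.M → b<x>.[N]a.M`  (a ≠ b, x ∉ fv N),
closed under all contexts. -/
inductive PStep : Tm → Tm → Prop where
  | perm {N M : Tm} {a b : ℕ} {x : String} (hab : a ≠ b) (hx : x ∉ fv N) :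
      PStep (.app N a (.abs b x M)) (.abs b x (.app N a M))
  | varC {M M' : Tm} (x : String) : PStep M M' → PStep (.var x M) (.var x M')
  | appL {N N' M : Tm} (a : ℕ) : PStep N N' → PStep (.app N a M) (.app N' a M)
  | appR {N M M' : Tm} (a : ℕ) : PStep M M' → PStep (.app N a M) (.app N a M')
  | absC {M M' : Tm} (a : ℕ) (x : String) : PStep M M' → PStep (.abs a x M) (.abs a x M')

/-- Number of abstractions in `M` whose location differs from `a`. -/
def countAbs (a : ℕ) : Tm → ℕ
  | .skip => 0
  | .var _ M => countAbs a M
  | .app N _ M => countAbs a N + countAbs a M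
  | .abs b _ M => (if b = a then 0 else 1) + countAbs a M

/-- The multiset, over all application subterms `[N]a.M`, of the number of
abstractions in `M` at a location different from `a`. -/
def meas : Tm → Multiset ℕ
  | .skip => 0
  | .var _ M => meas M
  | .app N a M => meas N + meas M + {countAbs a M}
  | .abs _ _ M => meas M

/-- The standard Dershowitz–Manna order on multisets of natural numbers:
`M < N` iff `M = X + Y`, `N = X + Z` with `Z` nonempty and every element of `Y`
strictly below some element of `Z`. -/
def DMLT (M N : Multiset ℕ) : Prop :=
  ∃ X Y Z : Multiset ℕ, Z ≠ 0 ∧ M = X + Y ∧ N = X + Z ∧ ∀ y ∈ Y, ∃ z ∈ Z, y < z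

/-- Steps preserve the abstraction count. -/
lemma countAbs_step {M N : Tm} (h : PStep M N) : ∀ a, countAbs a N = countAbs a M := by
  induction h with
  | @perm N M a b x hab hx =>
      intro c
      show (if b = c then 0 else 1) + (countAbs c N + countAbs c M)
          = countAbs c N + ((if b = c then 0 else 1) + countAbs c M)
      omega
  | varC x h ih => intro c; simp [countAbs, ih]
  | appL a h ih => intro c; simp [countAbs, ih]
  | appR a h ih => intro c; simp [countAbs, ih]
  | absC a x h ih => intro c; simp [countAbs, ih]

lemma dmlt_add_left {m n : Multiset ℕ} (k : Multiset ℕ) (h : DMLT m n) :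
    DMLT (k + m) (k + n) := by
  obtain ⟨X, Y, Z, hZ, hm, hn, hlt⟩ := h
  exact ⟨k + X, Y, Z, hZ, by rw [hm, add_assoc], by rw [hn, add_assoc], hlt⟩

lemma meas_step {M N : Tm} (h : PStep M N) : DMLT (meas N) (meas M) := by
  induction h with
  | @perm N M a b x hab hx =>
      refine ⟨meas N + meas M, {countAbs a M}, {(if b = a then 0 else 1) + countAbs a M},
        by simp, by simp [meas], by simp [meas, countAbs], ?_⟩
      intro y hy
      simp only [Multiset.mem_singleton] at hy
      subst hy
      refine ⟨_, Multiset.mem_singleton_self _, ?_⟩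
      have : b ≠ a := fun h => hab h.symm
      simp [this]
  | varC x h ih => simpa [meas] using ih
  | @appL N N' M a h ih =>
      have := dmlt_add_left (meas M + {countAbs a M}) ih
      obtain ⟨X, Y, Z, hZ, hm, hn, hlt⟩ := this
      refine ⟨X, Y, Z, hZ, ?_, ?_, hlt⟩
      · rw [show meas (Tm.app N' a M) = meas M + {countAbs a M} + meas N' by
          simp [meas]; abel, hm]
      · rw [show meas (Tm.app N a M) = meas M + {countAbs a M} + meas N by
          simp [meas]; abel, hn]
  | @appR N M M' a h ih =>
      have hc := countAbs_step h a
      have := dmlt_add_left (meas N + {countAbs a M}) ih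
      obtain ⟨X, Y, Z, hZ, hm, hn, hlt⟩ := this
      refine ⟨X, Y, Z, hZ, ?_, ?_, hlt⟩
      · rw [show meas (Tm.app N a M') = meas N + {countAbs a M} + meas M' by
          simp [meas, hc]; abel, hm]
      · rw [show meas (Tm.app N a M) = meas N + {countAbs a M} + meas M by
          simp [meas]; abel, hn]
  | absC a x h ih => simpa [meas] using ih

lemma sum_step {M N : Tm} (h : PStep M N) : (meas N).sum < (meas M).sum := by
  induction h with
  | @perm N M a b x hab hx =>
      have : b ≠ a := fun h => hab h.symm
      simp [meas, countAbs, this]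
  | varC x h ih => simpa [meas] using ih
  | @appL N N' M a h ih => simp [meas]; omega
  | @appR N M M' a h ih =>
      have hc := countAbs_step h a
      simp [meas, hc]; omega
  | absC a x h ih => simpa [meas] using ih

theorem stmt18 :
    (∀ M N : Tm, PStep M N → DMLT (meas N) (meas M)) ∧
    (∀ M : Tm, ¬ ∃ f : ℕ → Tm, f 0 = M ∧ ∀ n, PStep (f n) (f (n + 1))) := by
  constructor
  · intro M N h; exact meas_step h
  · intro M ⟨f, _, hf⟩
    have key : ∀ k n, (meas (f n)).sum < k → False := by
      intro k
      induction k with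
      | zero => intro n h; omega
      | succ k ih =>
          intro n h
          exact ih (n + 1) (by have := sum_step (hf n); omega)
    exact key ((meas (f 0)).sum + 1) 0 (by omega)
end
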